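/- (Appendix, general reduced state after local PT evolution.) Let ρ be the canonical two-qubit state with parameters mx, my, mz, m'x, m'y, m'z, Cxx, Cyy, Czz, assumed positive semidefinite, let D = 1 + 2·my·sin α + sin²α and assume D ≠ 0. Then Re(trace ρ₊) = D and Bob's normalized reduced state after the PT evolution with Alice applying A₊ = 1 is (Tr_A ρ₊)/D = !![R₊, Uoff; conj(Uoff), R₋], where R₊ = (1/2)·(1 + (1+sin²α)·m'z/D), R₋ = (1/2)·(1 − (1+sin²α)·m'z/D), and Uoff = ((1+sin²α)·m'x − Complex.I·((1+sin²α)·m'y + 2·Cyy·sin α))/(2·D). -/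

import Mathlib

open Matrix Kronecker Complex
open scoped ComplexOrder

noncomputable section

/-- Pauli matrix `σx`. -/
def σx : Matrix (Fin 2) (Fin 2) ℂ := !![0, 1; 1, 0]

/-- Pauli matrix `σy`. -/
def σy : Matrix (Fin 2) (Fin 2) ℂ := !![0, -Complex.I; Complex.I, 0]

/-- Pauli matrix `σz`. -/
def σz : Matrix (Fin 2) (Fin 2) ℂ := !![1, 0; 0, -1]

/-- The simulated PT-symmetric evolution operator at the chosen time. -/
def Upt (α : ℝ) : Matrix (Fin 2) (Fin 2) ℂ :=
  !![(Real.sin α : ℂ), -Complex.I; -Complex.I, -(Real.sin α : ℂ)]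

/-- Alice's operation `A₊` (do nothing). -/
def Apos : Matrix (Fin 2) (Fin 2) ℂ := 1

/-- Alice's operation `A₋` (bit flip `σx`). -/
def Aneg : Matrix (Fin 2) (Fin 2) ℂ := σx

/-- Unnormalized post-selected state after Alice applies `A₊` followed by the
simulated PT evolution. -/
def postPlus (α : ℝ) (ρ : Matrix (Fin 2 × Fin 2) (Fin 2 × Fin 2) ℂ) :
    Matrix (Fin 2 × Fin 2) (Fin 2 × Fin 2) ℂ :=
  ((Upt α * Apos) ⊗ₖ (1 : Matrix (Fin 2) (Fin 2) ℂ)) * ρ *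
    ((Upt α * Apos) ⊗ₖ (1 : Matrix (Fin 2) (Fin 2) ℂ))ᴴ

/-- Unnormalized post-selected state after Alice applies `A₋` followed by the
simulated PT evolution. -/
def postMinus (α : ℝ) (ρ : Matrix (Fin 2 × Fin 2) (Fin 2 × Fin 2) ℂ) :
    Matrix (Fin 2 × Fin 2) (Fin 2 × Fin 2) ℂ :=
  ((Upt α * Aneg) ⊗ₖ (1 : Matrix (Fin 2) (Fin 2) ℂ)) * ρ *
    ((Upt α * Aneg) ⊗ₖ (1 : Matrix (Fin 2) (Fin 2) ℂ))ᴴ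

/-- Probability that Bob obtains outcome `Π` given Alice applied `A₊`. -/
def Pplus (α : ℝ) (ρ : Matrix (Fin 2 × Fin 2) (Fin 2 × Fin 2) ℂ)
    (Pi : Matrix (Fin 2) (Fin 2) ℂ) : ℝ :=
  ((((1 : Matrix (Fin 2) (Fin 2) ℂ) ⊗ₖ Pi) * postPlus α ρ).trace).re /
    ((postPlus α ρ).trace).re

/-- Probability that Bob obtains outcome `Π` given Alice applied `A₋`. -/
def Pminus (α : ℝ) (ρ : Matrix (Fin 2 × Fin 2) (Fin 2 × Fin 2) ℂ)
    (Pi : Matrix (Fin 2) (Fin 2) ℂ) : ℝ :=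
  ((((1 : Matrix (Fin 2) (Fin 2) ℂ) ⊗ₖ Pi) * postMinus α ρ).trace).re /
    ((postMinus α ρ).trace).re

/-- Bob's `σy`-measurement projector onto `|+_y⟩ = (|0⟩ + i|1⟩)/√2`. -/
def Piy : Matrix (Fin 2) (Fin 2) ℂ :=
  (1/2 : ℂ) • !![1, -Complex.I; Complex.I, 1]

/-- Bob's rank-one projector `Π(z,u)` for an arbitrary projective measurement. -/
def Pizu (z u : ℝ) : Matrix (Fin 2) (Fin 2) ℂ :=
  !![((Real.cos (z/2))^2 : ℂ),
     (Real.cos (z/2) : ℂ) * (Real.sin (z/2) : ℂ) * Complex.exp (-(Complex.I * u));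
     (Real.cos (z/2) : ℂ) * (Real.sin (z/2) : ℂ) * Complex.exp (Complex.I * u),
     ((Real.sin (z/2))^2 : ℂ)]

/-- The single-qubit state `|+⟩ = (|0⟩ + |1⟩)/√2`. -/
def ketPlus : Fin 2 → ℂ := ![((1 / Real.sqrt 2 : ℝ) : ℂ), ((1 / Real.sqrt 2 : ℝ) : ℂ)]

/-- The single-qubit state `|−⟩ = (|0⟩ − |1⟩)/√2`. -/
def ketMinus : Fin 2 → ℂ := ![((1 / Real.sqrt 2 : ℝ) : ℂ), ((-(1 / Real.sqrt 2) : ℝ) : ℂ)]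

/-- The (normalized) pure state `|ψ_{β,γ}⟩ = (β|++⟩ + γ|−−⟩)/√(β²+γ²)`. -/
def ψpure (β γ : ℝ) : Fin 2 × Fin 2 → ℂ := fun q =>
  ((β : ℂ) * (ketPlus q.1 * ketPlus q.2) + (γ : ℂ) * (ketMinus q.1 * ketMinus q.2)) /
    ((Real.sqrt (β^2 + γ^2) : ℝ) : ℂ)

/-- The pure two-qubit density matrix `ρ_{β,γ} = |ψ_{β,γ}⟩⟨ψ_{β,γ}|`. -/
def ρpure (β γ : ℝ) : Matrix (Fin 2 × Fin 2) (Fin 2 × Fin 2) ℂ :=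
  Matrix.vecMulVec (ψpure β γ) (fun q => starRingEnd ℂ (ψpure β γ q))

/-- The maximally entangled state `|ψ⁺⟩ = (|00⟩ + |11⟩)/√2`. -/
def ψmax : Fin 2 × Fin 2 → ℂ := fun q =>
  if q.1 = q.2 then ((1 / Real.sqrt 2 : ℝ) : ℂ) else 0

/-- The two-qubit Werner state `ρ_W(p) = p |ψ⁺⟩⟨ψ⁺| + ((1-p)/4) 1`. -/
def ρWerner (p : ℝ) : Matrix (Fin 2 × Fin 2) (Fin 2 × Fin 2) ℂ :=
  (p : ℂ) • Matrix.vecMulVec ψmax (fun q => starRingEnd ℂ (ψmax q)) +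
    (((1 - p) / 4 : ℝ) : ℂ) • 1

/-- The canonical two-qubit state with magnetizations `mx my mz` (Alice),
`nx ny nz` (Bob) and diagonal correlators `Cxx Cyy Czz`. -/
def ρcan (mx my mz nx ny nz Cxx Cyy Czz : ℝ) :
    Matrix (Fin 2 × Fin 2) (Fin 2 × Fin 2) ℂ :=
  (1/4 : ℂ) • ((1 : Matrix (Fin 2 × Fin 2) (Fin 2 × Fin 2) ℂ)
    + (mx : ℂ) • (σx ⊗ₖ (1 : Matrix (Fin 2) (Fin 2) ℂ))
    + (my : ℂ) • (σy ⊗ₖ (1 : Matrix (Fin 2) (Fin 2) ℂ))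
    + (mz : ℂ) • (σz ⊗ₖ (1 : Matrix (Fin 2) (Fin 2) ℂ))
    + (nx : ℂ) • ((1 : Matrix (Fin 2) (Fin 2) ℂ) ⊗ₖ σx)
    + (ny : ℂ) • ((1 : Matrix (Fin 2) (Fin 2) ℂ) ⊗ₖ σy)
    + (nz : ℂ) • ((1 : Matrix (Fin 2) (Fin 2) ℂ) ⊗ₖ σz)
    + (Cxx : ℂ) • (σx ⊗ₖ σx)
    + (Cyy : ℂ) • (σy ⊗ₖ σy)
    + (Czz : ℂ) • (σz ⊗ₖ σz))

/-- Bob's reduced matrix: the partial trace over Alice's subsystem. -/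
def ptraceA (X : Matrix (Fin 2 × Fin 2) (Fin 2 × Fin 2) ℂ) :
    Matrix (Fin 2) (Fin 2) ℂ :=
  Matrix.of fun i j => ∑ k : Fin 2, X (k, i) (k, j)

/-- The trace distance `T(A,B) = (1/2) tr √((A-B)ᴴ (A-B))`, where the square
root is the positive semidefinite square root. -/
def traceDist (A B : Matrix (Fin 2) (Fin 2) ℂ) : ℝ :=
  (1/2) * ((((Matrix.posSemidef_conjTranspose_mul_self (A - B)).1.eigenvectorUnitary :
      Matrix (Fin 2) (Fin 2) ℂ) *
    Matrix.diagonal (fun i => ((Real.sqrt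
      ((Matrix.posSemidef_conjTranspose_mul_self (A - B)).1.eigenvalues i) : ℝ) : ℂ)) *
    (star (Matrix.posSemidef_conjTranspose_mul_self (A - B)).1.eigenvectorUnitary :
      Matrix (Fin 2) (Fin 2) ℂ)).trace).re

/-! Tracing out Alice is cyclic in her local operators, so
`Tr_A ((U ⊗ 1) ρ (U ⊗ 1)ᴴ) = Tr_A ((UᴴU ⊗ 1) ρ)` with `UᴴU = (1 + sin²α) 1 + 2 sin α σy`.
Since `Tr_A ((P ⊗ 1)(σ ⊗ τ)) = tr (P σ) τ` and the Pauli matrices are trace-orthogonal, only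
Alice's `1` and `σy` components of `ρ` survive: they give `D` on the diagonal and the extra
`2 Cyy sin α` in Bob's `σy` coefficient. -/

lemma trace_σx : σx.trace = 0 := by simp [σx, Matrix.trace_fin_two]

lemma trace_σy : σy.trace = 0 := by simp [σy, Matrix.trace_fin_two]

lemma trace_σz : σz.trace = 0 := by simp [σz, Matrix.trace_fin_two]

lemma trace_σy_mul_σx : (σy * σx).trace = 0 := by simp [σx, σy, Matrix.trace_fin_two]

lemma trace_σy_mul_σz : (σy * σz).trace = 0 := by simp [σy, σz, Matrix.trace_fin_two]

lemma σy_mul_σy : σy * σy = 1 := by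
  ext i j
  fin_cases i <;> fin_cases j <;> simp [σy]

lemma pauli_expansion (t x y z : ℂ) :
    t • (1 : Matrix (Fin 2) (Fin 2) ℂ) + x • σx + y • σy + z • σz =
      !![t + z, x - Complex.I * y; x + Complex.I * y, t - z] := by
  ext i j
  fin_cases i <;> fin_cases j <;>
    simp only [σx, σy, σz, Matrix.add_apply, Matrix.smul_apply, of_apply, cons_val',
      cons_val_zero, cons_val_one, cons_val_fin_one, one_apply_eq, one_apply_ne, smul_eq_mul,
      Fin.zero_eta, Fin.mk_one, Fin.isValue, ne_eq, zero_ne_one, one_ne_zero, not_false_eq_true] <;>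
    ring

lemma ptraceA_add (X Y : Matrix (Fin 2 × Fin 2) (Fin 2 × Fin 2) ℂ) :
    ptraceA (X + Y) = ptraceA X + ptraceA Y := by
  ext i j
  simp [ptraceA, Finset.sum_add_distrib]

lemma ptraceA_smul (c : ℂ) (X : Matrix (Fin 2 × Fin 2) (Fin 2 × Fin 2) ℂ) :
    ptraceA (c • X) = c • ptraceA X := by
  ext i j
  simp [ptraceA, mul_add]

lemma ptraceA_kronecker (A B : Matrix (Fin 2) (Fin 2) ℂ) :
    ptraceA (A ⊗ₖ B) = A.trace • B := by
  ext i j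
  simp [ptraceA, Matrix.trace, add_mul]

lemma trace_ptraceA (X : Matrix (Fin 2 × Fin 2) (Fin 2 × Fin 2) ℂ) :
    (ptraceA X).trace = X.trace := by
  simp only [Matrix.trace, ptraceA, Matrix.diag_apply, Matrix.of_apply, Fintype.sum_prod_type]
  exact Finset.sum_comm

lemma ptraceA_kronecker_one_mul_mul_kronecker_one (M N : Matrix (Fin 2) (Fin 2) ℂ)
    (X : Matrix (Fin 2 × Fin 2) (Fin 2 × Fin 2) ℂ) :
    ptraceA ((M ⊗ₖ (1 : Matrix (Fin 2) (Fin 2) ℂ)) * X * (N ⊗ₖ (1 : Matrix (Fin 2) (Fin 2) ℂ))) =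
      ptraceA (((N * M) ⊗ₖ (1 : Matrix (Fin 2) (Fin 2) ℂ)) * X) := by
  ext i j
  simp only [ptraceA, Matrix.of_apply, Matrix.mul_apply, Fintype.sum_prod_type,
    Matrix.kroneckerMap_apply, Matrix.one_apply, Fin.sum_univ_two, mul_ite, ite_mul, mul_one,
    mul_zero, zero_mul, Finset.sum_ite_eq, Finset.sum_ite_eq', Finset.mem_univ, if_true]
  ring

lemma ρcan_eq_sum_kronecker (mx my mz nx ny nz Cxx Cyy Czz : ℝ) :
    ρcan mx my mz nx ny nz Cxx Cyy Czz = (1/4 : ℂ) •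
      (1 ⊗ₖ (1 + (nx : ℂ) • σx + (ny : ℂ) • σy + (nz : ℂ) • σz)
        + σx ⊗ₖ ((mx : ℂ) • 1 + (Cxx : ℂ) • σx)
        + σy ⊗ₖ ((my : ℂ) • 1 + (Cyy : ℂ) • σy)
        + σz ⊗ₖ ((mz : ℂ) • 1 + (Czz : ℂ) • σz)) := by
  simp only [ρcan, Matrix.kronecker_add, Matrix.kronecker_smul, Matrix.one_kronecker_one]
  module

lemma ptraceA_kronecker_one_mul_ρcan (P : Matrix (Fin 2) (Fin 2) ℂ)
    (mx my mz nx ny nz Cxx Cyy Czz : ℝ) :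
    ptraceA ((P ⊗ₖ (1 : Matrix (Fin 2) (Fin 2) ℂ)) * ρcan mx my mz nx ny nz Cxx Cyy Czz) =
      (1/4 : ℂ) • (P.trace • (1 + (nx : ℂ) • σx + (ny : ℂ) • σy + (nz : ℂ) • σz)
        + (P * σx).trace • ((mx : ℂ) • 1 + (Cxx : ℂ) • σx)
        + (P * σy).trace • ((my : ℂ) • 1 + (Cyy : ℂ) • σy)
        + (P * σz).trace • ((mz : ℂ) • 1 + (Czz : ℂ) • σz)) := by
  simp only [ρcan_eq_sum_kronecker, Matrix.mul_smul, Matrix.mul_add, ← Matrix.mul_kronecker_mul,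
    Matrix.mul_one, Matrix.one_mul, ptraceA_add, ptraceA_smul, ptraceA_kronecker]

lemma conjTranspose_Upt_mul_Upt (α : ℝ) :
    (Upt α)ᴴ * Upt α = ((1 + Real.sin α ^ 2 : ℝ) : ℂ) • 1 + ((2 * Real.sin α : ℝ) : ℂ) • σy := by
  unfold Upt
  generalize Real.sin α = s
  ext i j
  fin_cases i <;> fin_cases j <;>
    simp only [σy, Matrix.mul_apply, Fin.sum_univ_two, conjTranspose_apply, Matrix.add_apply,
      Matrix.smul_apply, of_apply, cons_val', cons_val_zero, cons_val_one, cons_val_fin_one,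
      one_apply_eq, one_apply_ne, RCLike.star_def, conj_ofReal, conj_I, map_neg, smul_eq_mul,
      Fin.zero_eta, Fin.mk_one, Fin.isValue, ne_eq, zero_ne_one, one_ne_zero, not_false_eq_true,
      ofReal_add, ofReal_one, ofReal_pow, ofReal_mul, ofReal_ofNat, mul_neg, neg_mul, neg_neg,
      I_mul_I] <;>
    ring

lemma ptraceA_postPlus_ρcan (α mx my mz nx ny nz Cxx Cyy Czz : ℝ) :
    ptraceA (postPlus α (ρcan mx my mz nx ny nz Cxx Cyy Czz)) = (1/2 : ℂ) •
      (((1 + 2 * my * Real.sin α + Real.sin α ^ 2 : ℝ) : ℂ) • 1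
        + (((1 + Real.sin α ^ 2) * nx : ℝ) : ℂ) • σx
        + (((1 + Real.sin α ^ 2) * ny + 2 * Cyy * Real.sin α : ℝ) : ℂ) • σy
        + (((1 + Real.sin α ^ 2) * nz : ℝ) : ℂ) • σz) := by
  rw [postPlus, Apos, Matrix.mul_one, Matrix.conjTranspose_kronecker, Matrix.conjTranspose_one,
    ptraceA_kronecker_one_mul_mul_kronecker_one, conjTranspose_Upt_mul_Upt,
    ptraceA_kronecker_one_mul_ρcan]
  simp only [Matrix.add_mul, Matrix.smul_mul, Matrix.one_mul, σy_mul_σy, Matrix.trace_add,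
    Matrix.trace_smul, Matrix.trace_one, trace_σx, trace_σy, trace_σz, trace_σy_mul_σx,
    trace_σy_mul_σz, Fintype.card_fin]
  push_cast
  module

theorem stmt17_general (α mx my mz nx ny nz Cxx Cyy Czz : ℝ)
    (ρ : Matrix (Fin 2 × Fin 2) (Fin 2 × Fin 2) ℂ)
    (hρ : ρ = ρcan mx my mz nx ny nz Cxx Cyy Czz)
    (D : ℝ) (hD : D = 1 + 2 * my * Real.sin α + (Real.sin α)^2) (hD0 : D ≠ 0)
    (Rp Rm : ℝ) (Uoff : ℂ)
    (hRp : Rp = (1/2) * (1 + (1 + (Real.sin α)^2) * nz / D))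
    (hRm : Rm = (1/2) * (1 - (1 + (Real.sin α)^2) * nz / D))
    (hU : Uoff = ((((1 + (Real.sin α)^2) * nx : ℝ) : ℂ) -
        Complex.I * (((1 + (Real.sin α)^2) * ny + 2 * Cyy * Real.sin α : ℝ) : ℂ)) /
        ((2 * D : ℝ) : ℂ)) :
    ((postPlus α ρ).trace).re = D ∧
    D⁻¹ • ptraceA (postPlus α ρ) =
      !![(Rp : ℂ), Uoff; starRingEnd ℂ Uoff, (Rm : ℂ)] := by
  subst hρ hRp hRm hU
  have hred := ptraceA_postPlus_ρcan α mx my mz nx ny nz Cxx Cyy Czz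
  rw [pauli_expansion, ← hD] at hred
  generalize Real.sin α = s at hred ⊢
  constructor
  · rw [← trace_ptraceA, hred, Matrix.trace_smul, Matrix.trace_fin_two]
    simp only [of_apply, cons_val', cons_val_zero, cons_val_one, cons_val_fin_one, smul_eq_mul]
    ring_nf
    exact Complex.ofReal_re D
  · have hDc : (D : ℂ) ≠ 0 := Complex.ofReal_ne_zero.mpr hD0
    rw [hred]
    ext i j
    fin_cases i <;> fin_cases j <;>
      simp only [Matrix.smul_apply, of_apply, cons_val', cons_val_zero, cons_val_one,
        cons_val_fin_one, Fin.zero_eta, Fin.mk_one, Fin.isValue, smul_eq_mul, real_smul, ofReal_inv,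
        ofReal_div, ofReal_mul, ofReal_add, ofReal_sub, ofReal_one, ofReal_pow, ofReal_ofNat,
        map_div₀, map_sub, map_mul, map_add, map_one, map_pow, map_ofNat, conj_ofReal, conj_I,
        neg_mul, sub_neg_eq_add] <;>
      field_simp

/-- Appendix, general reduced state after local PT evolution: with
`D = 1 + 2 my sin α + sin²α ≠ 0`, the post-selection trace equals `D` and
Bob's normalized reduced state is `!![R₊, U; conj U, R₋]` with
`R₊ = (1/2)(1 + (1+sin²α) m'z / D)`, `R₋ = (1/2)(1 − (1+sin²α) m'z / D)` and
`U = ((1+sin²α) m'x − i((1+sin²α) m'y + 2 Cyy sin α)) / (2D)`. -/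
theorem stmt17 (α mx my mz nx ny nz Cxx Cyy Czz : ℝ)
    (ρ : Matrix (Fin 2 × Fin 2) (Fin 2 × Fin 2) ℂ)
    (hρ : ρ = ρcan mx my mz nx ny nz Cxx Cyy Czz)
    (hpsd : ρ.PosSemidef)
    (D : ℝ) (hD : D = 1 + 2 * my * Real.sin α + (Real.sin α)^2) (hD0 : D ≠ 0)
    (Rp Rm : ℝ) (Uoff : ℂ)
    (hRp : Rp = (1/2) * (1 + (1 + (Real.sin α)^2) * nz / D))
    (hRm : Rm = (1/2) * (1 - (1 + (Real.sin α)^2) * nz / D))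
    (hU : Uoff = ((((1 + (Real.sin α)^2) * nx : ℝ) : ℂ) -
        Complex.I * (((1 + (Real.sin α)^2) * ny + 2 * Cyy * Real.sin α : ℝ) : ℂ)) /
        ((2 * D : ℝ) : ℂ)) :
    ((postPlus α ρ).trace).re = D ∧
    D⁻¹ • ptraceA (postPlus α ρ) =
      !![(Rp : ℂ), Uoff; starRingEnd ℂ Uoff, (Rm : ℂ)] :=
  stmt17_general α mx my mz nx ny nz Cxx Cyy Czz ρ hρ D hD hD0 Rp Rm Uoff hRp hRm hU
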